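/- arXiv:2504.21636 — 2 statements merged into one kernel-verified Lean document; each statement's English description precedes it below -/
import Mathlib

section
/- Let n ≥ 1, let U be an invertible n × n matrix over 𝔽₂ = ZMod 2 with F := U⁻¹ and F(i) := {k : F_{i,k} = 1}, and let m_U be the 2^n × 2^n permutation matrix with m_U e_f = e_{U f} for f ∈ 𝔽₂ⁿ. Let a_i := Z^{⊗i} ⊗ σ⁻ ⊗ I^{⊗(n−1−i)} be the n-qubit Jordan–Wigner annihilation operators. Then for all i ≠ j, the conjugated interaction operator satisfies m_U · (a_i)† a_i (a_j)† a_j · m_U† = ¼ ( I − Z_{F(i)} − Z_{F(j)} + Z_{F(i) △ F(j)} ), where in particular Z_{F(i)} Z_{F(j)} = Z_{F(i) △ F(j)}. -/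
open Matrix Finset
open scoped symmDiff

namespace FQ

/-- Pauli X. -/
noncomputable def X : Matrix (ZMod 2) (ZMod 2) ℂ := !![0, 1; 1, 0]

/-- Pauli Y. -/
noncomputable def Y : Matrix (ZMod 2) (ZMod 2) ℂ := !![0, -Complex.I; Complex.I, 0]

/-- Pauli Z. -/
noncomputable def Z : Matrix (ZMod 2) (ZMod 2) ℂ := !![1, 0; 0, -1]

/-- Tensor product `M 0 ⊗ M 1 ⊗ ⋯ ⊗ M (n-1)` of a family of single-qubit operators, as a
`2^n × 2^n` matrix indexed by functions `Fin n → ZMod 2`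
(the identification of `(ℂ²)^⊗n` with `ℂ^(2^n)`). -/
noncomputable def tens {n : ℕ} (M : Fin n → Matrix (ZMod 2) (ZMod 2) ℂ) :
    Matrix (Fin n → ZMod 2) (Fin n → ZMod 2) ℂ :=
  Matrix.of fun f g => ∏ i, M i (f i) (g i)

/-- The lowering operator `σ⁻ = (X + iY)/2`. -/
noncomputable def σm : Matrix (ZMod 2) (ZMod 2) ℂ := !![0, 1; 0, 0]

/-- The `n`-qubit Jordan–Wigner annihilation operators: `ann n i = Z^⊗i ⊗ σ⁻ ⊗ I^⊗(n-1-i)`. -/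
noncomputable def ann (n i : ℕ) : Matrix (Fin n → ZMod 2) (Fin n → ZMod 2) ℂ :=
  tens fun j => if (j : ℕ) < i then Z else if (j : ℕ) = i then σm else 1

/-- The Pauli string `X_S`: Pauli `X` on each tensor factor in `S`, identity elsewhere. -/
noncomputable def Xstr {n : ℕ} (S : Finset (Fin n)) :
    Matrix (Fin n → ZMod 2) (Fin n → ZMod 2) ℂ :=
  tens fun j => if j ∈ S then X else 1

/-- The Pauli string `Y_S`: Pauli `Y` on each tensor factor in `S`, identity elsewhere. -/
noncomputable def Ystr {n : ℕ} (S : Finset (Fin n)) :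
    Matrix (Fin n → ZMod 2) (Fin n → ZMod 2) ℂ :=
  tens fun j => if j ∈ S then Y else 1

/-- The Pauli string `Z_S`: Pauli `Z` on each tensor factor in `S`, identity elsewhere. -/
noncomputable def Zstr {n : ℕ} (S : Finset (Fin n)) :
    Matrix (Fin n → ZMod 2) (Fin n → ZMod 2) ℂ :=
  tens fun j => if j ∈ S then Z else 1

/-- The `2^n × 2^n` permutation matrix `m_U` of the linear encoding determined by
`U ∈ GL_n(𝔽₂)`, sending the basis vector `e_f` to `e_{U f}`. -/
noncomputable def encMat {n : ℕ} (U : Matrix (Fin n) (Fin n) (ZMod 2)) :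
    Matrix (Fin n → ZMod 2) (Fin n → ZMod 2) ℂ :=
  Matrix.of fun g f => if g = U.mulVec f then 1 else 0

/-- `U(i) = {k : U_{k,i} = 1}`, the set of row indices of nonzero elements of the `i`-th
column of `U`. -/
def colSet {n : ℕ} (U : Matrix (Fin n) (Fin n) (ZMod 2)) (i : Fin n) : Finset (Fin n) :=
  Finset.univ.filter fun k => U k i = 1

/-- `F(i) = {k : F_{i,k} = 1}`, the set of column indices of nonzero elements of the `i`-th
row of `F`. -/
def rowSet {n : ℕ} (F : Matrix (Fin n) (Fin n) (ZMod 2)) (i : Fin n) : Finset (Fin n) :=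
  Finset.univ.filter fun k => F i k = 1

/-- `rowSet` with a natural-number index (junk value `∅` out of range). -/
def rowSetN {n : ℕ} (F : Matrix (Fin n) (Fin n) (ZMod 2)) (i : ℕ) : Finset (Fin n) :=
  if h : i < n then rowSet F ⟨i, h⟩ else ∅

/-- `P(i) = F(0) △ F(1) △ ⋯ △ F(i−1)`, the iterated symmetric difference of the rows of `F`. -/
def Pset {n : ℕ} (F : Matrix (Fin n) (Fin n) (ZMod 2)) : ℕ → Finset (Fin n)
  | 0 => ∅
  | i + 1 => Pset F i ∆ rowSetN F i

/-- `R(i) = P(i) △ F(i)`. -/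
def Rset {n : ℕ} (F : Matrix (Fin n) (Fin n) (ZMod 2)) (i : ℕ) : Finset (Fin n) :=
  Pset F i ∆ rowSetN F i

/-! Every operator involved is diagonal in the computational basis: `a_i† a_i` multiplies `e_f` by
the occupation number `(1 - (-1)^{f_i}) / 2`, `Z_S` by `(-1)^{∑_{k ∈ S} f_k}`, and conjugating a
diagonal operator by the permutation matrix `m_U` precomposes its entries with `f ↦ U⁻¹ f`.
Since `(U⁻¹ f)_i = ∑_{k ∈ F(i)} f_k`, the claim reduces to the scalar identity
`n_a n_b = ¼ (1 - ε_a - ε_b + ε_a ε_b)` for `ε = (-1)^·` and `n = (1 - ε) / 2`. -/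

end FQ

theorem ZMod.two_cases (a : ZMod 2) : a = 0 ∨ a = 1 := by
  revert a; decide

theorem PEquiv.conjTranspose_toMatrix {m m' α : Type*} [DecidableEq m] [DecidableEq m']
    [CommSemiring α] [StarRing α] (f : m ≃. m') :
    (f.toMatrix : Matrix m m' α)ᴴ = f.symm.toMatrix := by
  rw [conjTranspose, ← PEquiv.toMatrix_symm]
  exact PEquiv.map_toMatrix (starRingEnd α) f.symm

theorem Equiv.toPEquiv_toMatrix_mul_diagonal_mul_conjTranspose {m α : Type*} [Fintype m]
    [DecidableEq m] [CommSemiring α] [StarRing α] (e : m ≃ m) (d : m → α) :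
    e.toPEquiv.toMatrix * diagonal d * (e.toPEquiv.toMatrix)ᴴ = diagonal (d ∘ e) := by
  rw [PEquiv.conjTranspose_toMatrix, ← Equiv.toPEquiv_symm, PEquiv.toMatrix_toPEquiv_mul,
    PEquiv.mul_toMatrix_toPEquiv, Equiv.symm_symm, submatrix_submatrix, Function.id_comp,
    Function.comp_id, submatrix_diagonal_equiv]

namespace FQ

def signChar : AddChar (ZMod 2) ℂ where
  toFun a := if a = 0 then 1 else -1
  map_zero_eq_one' := if_pos rfl
  map_add_eq_mul' a b := by
    rcases ZMod.two_cases a with rfl | rfl <;> rcases ZMod.two_cases b with rfl | rfl <;>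
      simp [CharTwo.add_self_eq_zero]

@[simp] theorem signChar_one : signChar 1 = -1 := rfl

theorem signChar_sum {ι : Type*} (s : Finset ι) (f : ι → ZMod 2) :
    signChar (∑ k ∈ s, f k) = ∏ k ∈ s, signChar (f k) := by
  classical
  induction s using Finset.induction_on with
  | empty => simp
  | insert a s ha ih => rw [sum_insert ha, prod_insert ha, AddChar.map_add_eq_mul, ih]

noncomputable def occupation (a : ZMod 2) : ℂ := (1 - signChar a) / 2

theorem Z_eq_diagonal : Z = diagonal signChar := by
  ext a b
  rcases ZMod.two_cases a with rfl | rfl <;> rcases ZMod.two_cases b with rfl | rfl <;> rfl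

theorem σm_eq_single : σm = single 0 1 1 := by
  ext a b
  rcases ZMod.two_cases a with rfl | rfl <;> rcases ZMod.two_cases b with rfl | rfl <;> rfl

theorem Z_conjTranspose : Zᴴ = Z := by
  rw [Z_eq_diagonal, diagonal_conjTranspose]
  congr 1; funext a
  rcases ZMod.two_cases a with rfl | rfl <;> simp

theorem Z_mul_self : Z * Z = 1 := by
  rw [Z_eq_diagonal, diagonal_mul_diagonal, ← diagonal_one]
  congr 1; funext a
  rw [← AddChar.map_add_eq_mul, CharTwo.add_self_eq_zero, AddChar.map_zero_eq_one]

theorem σm_conjTranspose_mul_self : σmᴴ * σm = diagonal occupation := by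
  rw [σm_eq_single, conjTranspose_single, single_mul_single_same, ← diagonal_single]
  congr 1; funext a
  rcases ZMod.two_cases a with rfl | rfl <;> norm_num [occupation]

section

variable {n : ℕ}

theorem tens_mul (M N : Fin n → Matrix (ZMod 2) (ZMod 2) ℂ) :
    tens M * tens N = tens fun i => M i * N i := by
  ext f g
  simp only [tens, mul_apply, of_apply, Fintype.prod_sum, ← prod_mul_distrib]

theorem tens_conjTranspose (M : Fin n → Matrix (ZMod 2) (ZMod 2) ℂ) :
    (tens M)ᴴ = tens fun i => (M i)ᴴ := by
  ext f g
  simp [tens, conjTranspose_apply]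

theorem tens_diagonal (d : Fin n → ZMod 2 → ℂ) :
    tens (fun i => diagonal (d i)) = diagonal fun f => ∏ i, d i (f i) := by
  ext f g
  by_cases hfg : f = g
  · simp [tens, hfg]
  · obtain ⟨k, hk⟩ := Function.ne_iff.mp hfg
    simp only [tens, of_apply, diagonal_apply, if_neg hfg]
    exact prod_eq_zero (mem_univ k) (if_neg hk)

theorem ann_conjTranspose_mul_self (i : Fin n) :
    (ann n i)ᴴ * ann n i = diagonal fun f => occupation (f i) := by
  have factor : ∀ k : Fin n,
      (if (k : ℕ) < i then Z else if (k : ℕ) = i then σm else 1)ᴴ *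
        (if (k : ℕ) < i then Z else if (k : ℕ) = i then σm else 1) =
      diagonal fun a => if k = i then occupation a else 1 := by
    intro k
    rcases lt_trichotomy k i with hki | rfl | hik
    · simp [hki, hki.ne, Z_conjTranspose, Z_mul_self]
    · simp [σm_conjTranspose_mul_self]
    · simp [hik.ne', not_lt.mpr hik.le, Fin.val_ne_of_ne hik.ne']
  rw [ann, tens_conjTranspose, tens_mul, funext factor, tens_diagonal]
  simp only [prod_ite_eq', mem_univ, if_true]

theorem Zstr_eq_diagonal (S : Finset (Fin n)) :
    Zstr S = diagonal fun f => ∏ k ∈ S, signChar (f k) := by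
  have factor : ∀ k,
      (if k ∈ S then Z else 1) = diagonal fun a => if k ∈ S then signChar a else 1 := by
    intro k
    split_ifs
    exacts [Z_eq_diagonal, diagonal_one.symm]
  rw [Zstr, funext factor, tens_diagonal]
  simp_rw [prod_ite_mem, univ_inter]

theorem Zstr_mul_Zstr (S T : Finset (Fin n)) : Zstr S * Zstr T = Zstr (S ∆ T) := by
  rw [Zstr, Zstr, Zstr, tens_mul]
  congr 1; funext k
  by_cases hS : k ∈ S <;> by_cases hT : k ∈ T <;> simp [hS, hT, mem_symmDiff, Z_mul_self]

theorem mulVec_apply_eq_sum_rowSet (F : Matrix (Fin n) (Fin n) (ZMod 2))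
    (f : Fin n → ZMod 2) (i : Fin n) : (F *ᵥ f) i = ∑ k ∈ rowSet F i, f k := by
  rw [mulVec, dotProduct, rowSet, sum_filter]
  refine sum_congr rfl fun k _ => ?_
  rcases ZMod.two_cases (F i k) with h | h <;> simp [h]

theorem Zstr_rowSet (F : Matrix (Fin n) (Fin n) (ZMod 2)) (i : Fin n) :
    Zstr (rowSet F i) = diagonal fun f => signChar ((F *ᵥ f) i) := by
  simp_rw [Zstr_eq_diagonal, mulVec_apply_eq_sum_rowSet, signChar_sum]

theorem encMat_mul_diagonal_mul_conjTranspose (U : Matrix (Fin n) (Fin n) (ZMod 2))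
    (hU : IsUnit U) (d : (Fin n → ZMod 2) → ℂ) :
    encMat U * diagonal d * (encMat U)ᴴ = diagonal fun f => d (U⁻¹ *ᵥ f) := by
  have : Invertible U := hU.invertible
  let e := (U.toLinearEquiv' this).toEquiv
  have he : ∀ f, e f = U *ᵥ f := fun f => toLin'_apply U f
  have he_symm : ∀ f, e.symm f = U⁻¹ *ᵥ f := fun f => by
    rw [← invOf_eq_nonsing_inv]; exact toLin'_apply _ f
  have hencMat : encMat U = e.symm.toPEquiv.toMatrix := by
    ext g f
    simp only [encMat, of_apply, PEquiv.toMatrix_apply, Equiv.toPEquiv_apply, Option.mem_def,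
      Option.some.injEq, Equiv.symm_apply_eq, he]
  rw [hencMat, Equiv.toPEquiv_toMatrix_mul_diagonal_mul_conjTranspose]
  exact congrArg diagonal (funext fun f => congrArg d (he_symm f))

end

theorem linear_encoding_interaction_operator_general (n : ℕ)
    (U : Matrix (Fin n) (Fin n) (ZMod 2)) (hU : IsUnit U) :
    ∀ i j : Fin n, i ≠ j →
      encMat U * ((ann n i)ᴴ * ann n i * ((ann n j)ᴴ * ann n j)) * (encMat U)ᴴ =
        (1 / 4 : ℂ) •
          (1 - Zstr (rowSet U⁻¹ i) - Zstr (rowSet U⁻¹ j) +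
            Zstr (rowSet U⁻¹ i ∆ rowSet U⁻¹ j)) ∧
      Zstr (rowSet U⁻¹ i) * Zstr (rowSet U⁻¹ j) = Zstr (rowSet U⁻¹ i ∆ rowSet U⁻¹ j) := by
  intro i j _
  refine ⟨?_, Zstr_mul_Zstr _ _⟩
  rw [← Zstr_mul_Zstr, Zstr_rowSet, Zstr_rowSet, ann_conjTranspose_mul_self,
    ann_conjTranspose_mul_self, diagonal_mul_diagonal, diagonal_mul_diagonal,
    encMat_mul_diagonal_mul_conjTranspose U hU, ← diagonal_one, diagonal_sub, diagonal_sub,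
    diagonal_add, ← diagonal_smul]
  congr 1; funext f
  simp only [occupation, Pi.smul_apply, smul_eq_mul]
  ring

/-- conjugating the Jordan–Wigner interaction operator `a_i† a_i a_j† a_j` by the
permutation matrix `m_U` of a linear encoding `U ∈ GL_n(𝔽₂)` gives
`¼(I − Z_{F(i)} − Z_{F(j)} + Z_{F(i) △ F(j)})` with `F = U⁻¹`; in particular
`Z_{F(i)} Z_{F(j)} = Z_{F(i) △ F(j)}`. -/
theorem linear_encoding_interaction_operator (n : ℕ) (hn : 1 ≤ n)
    (U : Matrix (Fin n) (Fin n) (ZMod 2)) (hU : IsUnit U) :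
    ∀ i j : Fin n, i ≠ j →
      encMat U * ((ann n i)ᴴ * ann n i * ((ann n j)ᴴ * ann n j)) * (encMat U)ᴴ =
        (1 / 4 : ℂ) •
          (1 - Zstr (rowSet U⁻¹ i) - Zstr (rowSet U⁻¹ j) +
            Zstr (rowSet U⁻¹ i ∆ rowSet U⁻¹ j)) ∧
      Zstr (rowSet U⁻¹ i) * Zstr (rowSet U⁻¹ j) = Zstr (rowSet U⁻¹ i ∆ rowSet U⁻¹ j) :=
  linear_encoding_interaction_operator_general n U hU

end FQ
end

section
/- Let 1 ≤ n ≤ m and let A_0,…,A_{2n−1} be 2^m × 2^m complex matrices that are self-adjoint and satisfy the Majorana anticommutation relations A_j A_k + A_k A_j = 2δ_{jk} I for all j,k ∈ {0,…,2n−1}. Let Γ_0,…,Γ_{2n−1} be the n-qubit Jordan–Wigner Majorana operators Γ_{2i} := Z^{⊗i} ⊗ X ⊗ I^{⊗(n−1−i)}, Γ_{2i+1} := Z^{⊗i} ⊗ Y ⊗ I^{⊗(n−1−i)}. Then there exists a linear isometry V : ℂ^{2^n} → ℂ^{2^m} (V† V = I_{2^n}) such that A_k V = V Γ_k for every k ∈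 {0,…,2n−1}. (Hence any family of 2^m-dimensional qubit operators satisfying the Majorana relations is, on a 2^n-dimensional invariant subspace, unitarily equivalent to the Jordan–Wigner representation; this realizes the implication from a valid Pauli representation of the fermionic algebra to the existence of a fermion-qubit mapping.) -/
/-!
The mode parities `B_j = -i A_{2j} A_{2j+1}` (which Jordan–Wigner sends to `Z_j`) are commuting
self-adjoint involutions, and they have a common `+1`-eigenvector `v`, the vacuum. The vectors
`A_0^{s_0} A_2^{s_1} ⋯ A_{2n-2}^{s_{n-1}} v` are unit vectors, since the monomials are unitary, and
eigenvectors of `B_j` with eigenvalue `(-1)^{s_j}`, hence orthonormal. On them `A_{2j}` acts as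
`Γ_{2j}` does on the computational basis: moving it past the factors `A_{2i}`, `i < j`, produces
the string `Z^{⊗j}`. Finally `A_{2j+1} = i A_{2j} B_j` acts as `Γ_{2j+1}`, since `Y = i X Z`.
-/

open Matrix Finset
open scoped symmDiff

namespace FQ

/-- The `n`-qubit Jordan–Wigner Majorana operators:
`gamma n (2i) = Z^⊗i ⊗ X ⊗ I^⊗(n-1-i)` and `gamma n (2i+1) = Z^⊗i ⊗ Y ⊗ I^⊗(n-1-i)`. -/
noncomputable def gamma (n k : ℕ) : Matrix (Fin n → ZMod 2) (Fin n → ZMod 2) ℂ :=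
  tens fun j => if (j : ℕ) < k / 2 then Z
    else if (j : ℕ) = k / 2 then (if k % 2 = 0 then X else Y) else 1

lemma zmod_two_eq_zero_or_one (a : ZMod 2) : a = 0 ∨ a = 1 := by
  decide +revert

lemma zmod_two_eq_of_ne_add_one {a b : ZMod 2} (h : a ≠ b + 1) : a = b := by
  decide +revert

section Monomial

variable {R : Type*} [Ring R]

structure IsMajoranaFamily (N : ℕ) (A : ℕ → R) : Prop where
  mul_self : ∀ j < N, A j * A j = 1
  anticomm : ∀ j < N, ∀ k < N, j ≠ k → A j * A k = -(A k * A j)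

lemma IsMajoranaFamily.of_anticommutator [Module ℂ R] {N : ℕ} {A : ℕ → R}
    (hrel : ∀ j k, j < N → k < N →
      A j * A k + A k * A j = if j = k then (2 : ℂ) • (1 : R) else 0) :
    IsMajoranaFamily N A where
  mul_self j hj := by
    have hsq := hrel j j hj hj
    rw [if_pos rfl, ← two_smul ℂ] at hsq
    exact smul_right_injective R two_ne_zero hsq
  anticomm j hj k hk hjk := eq_neg_of_add_eq_zero_left <| by rw [hrel j k hj hk, if_neg hjk]

variable (A : ℕ → R)

def factor (t : ℕ → ZMod 2) (i : ℕ) : R := if t i = 1 then A (2 * i) else 1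

def monomial (t : ℕ → ZMod 2) : ℕ → R
  | 0 => 1
  | c + 1 => monomial t c * factor A t c

variable {A}

lemma monomial_congr {t u : ℕ → ZMod 2} {c : ℕ} (h : ∀ i < c, t i = u i) :
    monomial A t c = monomial A u c := by
  induction c with
  | zero => rfl
  | succ c ih =>
    simp only [monomial, factor, h c c.lt_succ_self, ih fun i hi => h i (by omega)]

lemma mul_monomial {x : R} {ε : ℕ → ℤ} (t : ℕ → ZMod 2) {c : ℕ}
    (hx : ∀ i < c, x * A (2 * i) = ε i • (A (2 * i) * x)) :
    x * monomial A t c = (∏ i ∈ range c, ε i ^ (t i).val) • (monomial A t c * x) := by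
  induction c with
  | zero => simp [monomial]
  | succ c ih =>
    have hfactor : x * factor A t c = ε c ^ (t c).val • (factor A t c * x) := by
      rcases zmod_two_eq_zero_or_one (t c) with htc | htc <;>
        simp [factor, htc, hx c c.lt_succ_self, ZMod.val_one]
    rw [monomial, ← mul_assoc, ih fun i hi => hx i (by omega), smul_mul_assoc, mul_assoc,
      hfactor, mul_smul_comm, smul_smul, prod_range_succ, ← mul_assoc]

lemma IsMajoranaFamily.mul_factor_flip {N : ℕ} (h : IsMajoranaFamily N A) (t : ℕ → ZMod 2)
    {j : ℕ} (hj : 2 * j < N) : A (2 * j) * factor A t j = factor A (t + Pi.single j 1) j := by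
  rcases zmod_two_eq_zero_or_one (t j) with htj | htj
  · simp [factor, htj]
  · simp [factor, htj, h.mul_self _ hj, show (1 + 1 : ZMod 2) = 0 from rfl]

lemma IsMajoranaFamily.mul_monomial_flip {N : ℕ} (h : IsMajoranaFamily N A) (t : ℕ → ZMod 2)
    {j c : ℕ} (hj : 2 * j < N) (hjc : j < c) :
    A (2 * j) * monomial A t c =
      (∏ i ∈ range j, (-1 : ℤ) ^ (t i).val) • monomial A (t + Pi.single j 1) c := by
  induction c, hjc using Nat.le_induction with
  | base =>
    have hpass := mul_monomial (x := A (2 * j)) (ε := fun _ => -1) t (c := j) fun i hi => by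
      rw [h.anticomm _ hj _ (by omega) (by omega), neg_one_zsmul]
    have hprefix : monomial A t j = monomial A (t + Pi.single j 1) j :=
      monomial_congr fun i hi => by simp [hi.ne]
    rw [monomial, monomial, ← mul_assoc, hpass, smul_mul_assoc, mul_assoc,
      h.mul_factor_flip t hj, hprefix]
  | succ c hjc ih =>
    have hcj : c ≠ j := by omega
    have hfactor : factor A t c = factor A (t + Pi.single j 1) c := by simp [factor, hcj]
    rw [monomial, monomial, ← mul_assoc, ih, smul_mul_assoc, hfactor]

lemma IsMajoranaFamily.monomial_mem_unitary [StarRing R] {N : ℕ} (h : IsMajoranaFamily N A)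
    (hsa : ∀ k < N, IsSelfAdjoint (A k)) (t : ℕ → ZMod 2) {c : ℕ} (hc : 2 * c ≤ N) :
    monomial A t c ∈ unitary R := by
  induction c with
  | zero => exact one_mem _
  | succ c ih =>
    refine mul_mem (ih (by omega)) ?_
    unfold factor
    split_ifs
    · have hsq := h.mul_self (2 * c) (by omega)
      exact ⟨by rw [(hsa _ (by omega)).star_eq, hsq], by rw [(hsa _ (by omega)).star_eq, hsq]⟩
    · exact one_mem _

end Monomial

section Parity

variable {R : Type*} [Ring R] [Algebra ℂ R] {n : ℕ} {A : ℕ → R}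

variable (A) in
def parity (j : ℕ) : R := -Complex.I • (A (2 * j) * A (2 * j + 1))

namespace IsMajoranaFamily

variable (h : IsMajoranaFamily (2 * n) A)
include h

lemma parity_mul_self {j : ℕ} (hj : j < n) : parity A j * parity A j = 1 := by
  have hswap := h.anticomm (2 * j + 1) (by omega) (2 * j) (by omega) (by omega)
  simp only [parity, smul_mul_smul_comm, neg_mul_neg, Complex.I_mul_I]
  rw [mul_assoc, ← mul_assoc (A (2 * j + 1)), hswap, neg_mul, mul_assoc, h.mul_self _ (by omega),
    mul_one, mul_neg, h.mul_self _ (by omega), neg_smul, one_smul, neg_neg]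

lemma commute_parity {k j : ℕ} (hk : k < 2 * n) (hj : j < n) (hk₀ : k ≠ 2 * j)
    (hk₁ : k ≠ 2 * j + 1) : Commute (A k) (parity A j) := by
  have h₀ := h.anticomm k hk (2 * j) (by omega) hk₀
  have h₁ := h.anticomm k hk (2 * j + 1) (by omega) hk₁
  refine Commute.smul_right ?_ _
  rw [Commute, SemiconjBy, ← mul_assoc, h₀, neg_mul, mul_assoc, h₁, mul_neg, neg_neg, mul_assoc]

lemma anticomm_parity {j : ℕ} (hj : j < n) :
    A (2 * j) * parity A j = -(parity A j * A (2 * j)) := by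
  have hswap := h.anticomm (2 * j + 1) (by omega) (2 * j) (by omega) (by omega)
  simp only [parity, mul_smul_comm, smul_mul_assoc, mul_assoc, hswap, ← smul_neg, mul_neg,
    neg_neg]

lemma commute_parity_parity {i j : ℕ} (hi : i < n) (hj : j < n) :
    Commute (parity A i) (parity A j) := by
  rcases eq_or_ne i j with rfl | hij
  · exact Commute.refl _
  · refine (Commute.mul_left ?_ ?_).smul_left _ <;>
      exact h.commute_parity (by omega) hj (by omega) (by omega)

lemma parity_mul_monomial (t : ℕ → ZMod 2) {j : ℕ} (hj : j < n) :
    parity A j * monomial A t n = (-1 : ℤ) ^ (t j).val • (monomial A t n * parity A j) := by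
  rw [mul_monomial (ε := fun i => if i = j then -1 else 1) t fun i hi => ?_]
  · simp_rw [ite_pow, one_pow, prod_ite_eq' _ j, if_pos (mem_range.2 hj)]
  · split_ifs with hij
    · rw [hij, neg_one_zsmul, h.anticomm_parity hj, neg_neg]
    · rw [one_zsmul, (h.commute_parity (by omega) hj (by omega) (by omega)).eq]

lemma eq_smul_mul_parity {j : ℕ} (hj : j < n) :
    A (2 * j + 1) = Complex.I • (A (2 * j) * parity A j) := by
  rw [parity, mul_smul_comm, ← mul_assoc, h.mul_self _ (by omega), one_mul, smul_smul, mul_neg,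
    Complex.I_mul_I, neg_neg, one_smul]

lemma isSelfAdjoint_parity [StarRing R] [StarModule ℂ R]
    (hsa : ∀ k < 2 * n, IsSelfAdjoint (A k)) {j : ℕ} (hj : j < n) :
    IsSelfAdjoint (parity A j) := by
  have hswap := h.anticomm (2 * j + 1) (by omega) (2 * j) (by omega) (by omega)
  rw [IsSelfAdjoint, parity, star_smul, star_mul, (hsa _ (by omega)).star_eq,
    (hsa _ (by omega)).star_eq, hswap, star_neg, Complex.star_def, Complex.conj_I, smul_neg,
    neg_smul, neg_neg]

end IsMajoranaFamily

end Parity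

section Vectors

variable {ι : Type*} [Fintype ι]

open scoped ComplexOrder in
lemma exists_smul_star_dotProduct_self_eq_one {w : ι → ℂ} (hw : w ≠ 0) :
    ∃ c : ℂ, star (c • w) ⬝ᵥ (c • w) = 1 := by
  obtain ⟨hre, him⟩ := Complex.pos_iff.1 (dotProduct_star_self_pos_iff.2 hw)
  set r := (star w ⬝ᵥ w).re
  have hwr : star w ⬝ᵥ w = r := Complex.ext rfl (by simp [← him])
  refine ⟨((√r)⁻¹ : ℝ), ?_⟩
  rw [star_smul, smul_dotProduct, dotProduct_smul, hwr, Complex.star_def, Complex.conj_ofReal,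
    smul_eq_mul, smul_eq_mul, ← mul_assoc]
  norm_cast
  rw [← mul_inv, Real.mul_self_sqrt hre.le, inv_mul_cancel₀ hre.ne']

lemma star_dotProduct_eq_zero_of_isHermitian {B : Matrix ι ι ℂ} (hB : B.IsHermitian)
    {x y : ι → ℂ} {a b : ℂ} (hx : B *ᵥ x = a • x) (hy : B *ᵥ y = b • y) (hab : star a ≠ b) :
    star x ⬝ᵥ y = 0 := by
  have heig : star a * (star x ⬝ᵥ y) = b * (star x ⬝ᵥ y) := calc
    star a * (star x ⬝ᵥ y) = star (B *ᵥ x) ⬝ᵥ y := by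
      rw [hx, star_smul, smul_dotProduct, smul_eq_mul]
    _ = star x ⬝ᵥ (B *ᵥ y) := by rw [star_mulVec, hB.eq, dotProduct_mulVec]
    _ = b * (star x ⬝ᵥ y) := by rw [hy, dotProduct_smul, smul_eq_mul]
  exact (mul_eq_mul_right_iff.1 heig).resolve_left hab

variable [DecidableEq ι]

lemma star_mulVec_dotProduct_mulVec_of_mem_unitary {U : Matrix ι ι ℂ} (hU : U ∈ unitary _)
    (v w : ι → ℂ) : star (U *ᵥ v) ⬝ᵥ (U *ᵥ w) = star v ⬝ᵥ w := by
  rw [star_mulVec, ← dotProduct_mulVec, mulVec_mulVec, ← star_eq_conjTranspose,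
    Unitary.star_mul_self_of_mem hU, one_mulVec]

variable {n : ℕ} {A : ℕ → Matrix ι ι ℂ}

lemma IsMajoranaFamily.exists_vacuum [Nonempty ι] (h : IsMajoranaFamily (2 * n) A) :
    ∃ v : ι → ℂ, star v ⬝ᵥ v = 1 ∧ ∀ j < n, parity A j *ᵥ v = v := by
  suffices hvac : ∀ c ≤ n, ∃ v : ι → ℂ, v ≠ 0 ∧ ∀ j < c, parity A j *ᵥ v = v by
    obtain ⟨w, hw0, hw⟩ := hvac n le_rfl
    obtain ⟨c, hc⟩ := exists_smul_star_dotProduct_self_eq_one hw0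
    exact ⟨c • w, hc, fun j hj => by rw [mulVec_smul, hw j hj]⟩
  intro c hc
  induction c with
  | zero =>
    obtain ⟨v, hv⟩ := exists_ne (0 : ι → ℂ)
    exact ⟨v, hv, by simp⟩
  | succ c ih =>
    obtain ⟨v, hv0, hv⟩ := ih (by omega)
    -- Either `(1 + parity A c) v` is a `+1`-eigenvector of `parity A c`, or `v` is a
    -- `-1`-eigenvector of it and `A (2c)`, which anticommutes with it, flips the sign.
    by_cases hproj : (1 + parity A c) *ᵥ v = 0
    · have hneg : parity A c *ᵥ v = -v := by
        rw [add_mulVec, one_mulVec] at hproj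
        exact eq_neg_of_add_eq_zero_right hproj
      refine ⟨A (2 * c) *ᵥ v, fun hAv => hv0 ?_, fun j hj => ?_⟩
      · rw [← one_mulVec v, ← h.mul_self (2 * c) (by omega), ← mulVec_mulVec, hAv, mulVec_zero]
      rcases Nat.lt_succ_iff_lt_or_eq.1 hj with hj | rfl
      · rw [mulVec_mulVec, ← (h.commute_parity (by omega) (by omega) (by omega) (by omega)).eq,
          ← mulVec_mulVec, hv j hj]
      · rw [mulVec_mulVec, ← neg_eq_iff_eq_neg.2 (h.anticomm_parity (by omega)), neg_mulVec,
          ← mulVec_mulVec, hneg, mulVec_neg, neg_neg]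
    · refine ⟨(1 + parity A c) *ᵥ v, hproj, fun j hj => ?_⟩
      rcases Nat.lt_succ_iff_lt_or_eq.1 hj with hj | rfl
      · rw [mulVec_mulVec, ((Commute.one_right _).add_right
          (h.commute_parity_parity (i := j) (j := c) (by omega) (by omega))).eq, ← mulVec_mulVec,
          hv j hj]
      · rw [mulVec_mulVec, mul_add, mul_one, h.parity_mul_self (by omega), add_comm]

end Vectors

section JordanWigner

lemma Z_apply_self (a : ZMod 2) : Z a a = (-1) ^ a.val := by
  rcases zmod_two_eq_zero_or_one a with rfl | rfl <;>
    simp only [ZMod.val_zero, ZMod.val_one, pow_zero, pow_one] <;> rfl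

lemma X_apply_add_one_self (a : ZMod 2) : X (a + 1) a = 1 := by
  rcases zmod_two_eq_zero_or_one a with rfl | rfl <;> rfl

lemma Y_apply_add_one_self (a : ZMod 2) : Y (a + 1) a = Complex.I * (-1) ^ a.val := by
  rcases zmod_two_eq_zero_or_one a with rfl | rfl <;>
    simp only [ZMod.val_zero, ZMod.val_one, pow_zero, pow_one, mul_one, mul_neg] <;> rfl

lemma isDiag_Z : Z.IsDiag := by
  intro a b hab
  rcases zmod_two_eq_zero_or_one a with rfl | rfl <;>
    rcases zmod_two_eq_zero_or_one b with rfl | rfl <;> first | rfl | exact absurd rfl hab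

lemma X_apply_self (a : ZMod 2) : X a a = 0 := by
  rcases zmod_two_eq_zero_or_one a with rfl | rfl <;> rfl

lemma Y_apply_self (a : ZMod 2) : Y a a = 0 := by
  rcases zmod_two_eq_zero_or_one a with rfl | rfl <;> rfl

variable {n : ℕ}

def extendByZero (s : Fin n → ZMod 2) : ℕ → ZMod 2 := fun i => if h : i < n then s ⟨i, h⟩ else 0

@[simp]
lemma extendByZero_apply (s : Fin n → ZMod 2) (i : Fin n) : extendByZero s i = s i := by
  simp [extendByZero]

lemma extendByZero_add_single (s : Fin n → ZMod 2) (j : Fin n) :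
    extendByZero (s + Pi.single j 1) = extendByZero s + Pi.single (j : ℕ) 1 := by
  funext i
  by_cases hi : i < n
  · simp [extendByZero, hi, Pi.single_apply, Fin.ext_iff]
  · have hij : i ≠ j := by omega
    simp [extendByZero, hi, hij]

lemma tens_apply_eq_zero {M : Fin n → Matrix (ZMod 2) (ZMod 2) ℂ} {j : Fin n}
    (hM : ∀ i ≠ j, (M i).IsDiag) (hMj : ∀ a, M j a a = 0) {s t : Fin n → ZMod 2}
    (hts : t ≠ s + Pi.single j 1) : tens M t s = 0 := by
  obtain ⟨i, hi⟩ := Function.ne_iff.1 hts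
  refine prod_eq_zero (mem_univ i) ?_
  rcases eq_or_ne i j with rfl | hij
  · rw [zmod_two_eq_of_ne_add_one (a := t i) (b := s i) (by simpa using hi), hMj]
  · exact hM i hij (by simpa [hij] using hi)

lemma tens_add_single_apply (M : Fin n → Matrix (ZMod 2) (ZMod 2) ℂ) (s : Fin n → ZMod 2)
    (j : Fin n) :
    tens M (s + Pi.single j 1) s = M j (s j + 1) (s j) * ∏ i ∈ univ.erase j, M i (s i) (s i) := by
  rw [tens, of_apply, ← mul_prod_erase _ _ (mem_univ j)]
  congr 1
  · simp
  · exact prod_congr rfl fun i hi => by simp [ne_of_mem_erase hi]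

variable {k : ℕ} {j : Fin n}

lemma gamma_apply_eq_zero (hkj : k / 2 = j) {s t : Fin n → ZMod 2}
    (hts : t ≠ s + Pi.single j 1) : gamma n k t s = 0 := by
  refine tens_apply_eq_zero (fun i hij => ?_) (fun a => ?_) hts
  · have hik : (i : ℕ) ≠ k / 2 := by rw [hkj]; exact Fin.val_ne_of_ne hij
    split_ifs
    exacts [isDiag_Z, isDiag_one]
  · simp only [hkj, lt_irrefl, if_false, if_true]
    split_ifs
    exacts [X_apply_self a, Y_apply_self a]

lemma gamma_add_single_apply (hkj : k / 2 = j) (s : Fin n → ZMod 2) :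
    gamma n k (s + Pi.single j 1) s =
      (if k % 2 = 0 then 1 else Complex.I * (-1) ^ (s j).val) *
        ∏ i ∈ range j, (-1 : ℂ) ^ (extendByZero s i).val := by
  rw [gamma, tens_add_single_apply]
  congr 1
  · simp only [hkj, lt_irrefl, if_false, if_true]
    split_ifs
    exacts [X_apply_add_one_self _, Y_apply_add_one_self _]
  · calc _ = ∏ i : Fin n, if (i : ℕ) < j then (-1 : ℂ) ^ (s i).val else 1 := by
          rw [← prod_erase univ (a := j) (by simp)]
          refine prod_congr rfl fun i hi => ?_
          have hik : (i : ℕ) ≠ k / 2 := by rw [hkj]; exact Fin.val_ne_of_ne (ne_of_mem_erase hi)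
          rw [← hkj]
          split_ifs
          exacts [Z_apply_self _, one_apply_eq _]
      _ = ∏ i ∈ range n, if i < j then (-1 : ℂ) ^ (extendByZero s i).val else 1 := by
          rw [← Fin.prod_univ_eq_prod_range]; simp
      _ = _ := by
          rw [← prod_filter]
          congr 1
          ext i
          simp only [mem_filter, mem_range]
          omega

lemma mul_gamma_apply {α : Type*} (hkj : k / 2 = j)
    (V : Matrix α (Fin n → ZMod 2) ℂ) (f : α) (s : Fin n → ZMod 2) :
    (V * gamma n k) f s = V f (s + Pi.single j 1) * gamma n k (s + Pi.single j 1) s := by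
  rw [mul_apply]
  exact sum_eq_single _ (fun t _ hts => by rw [gamma_apply_eq_zero hkj hts, mul_zero])
    (fun h => absurd (mem_univ _) h)

end JordanWigner

section FockVectors

variable {ι : Type*} [Fintype ι] [DecidableEq ι] {n : ℕ} {A : ℕ → Matrix ι ι ℂ} {v : ι → ℂ}

variable (A v) in
def fockVector (s : Fin n → ZMod 2) : ι → ℂ := monomial A (extendByZero s) n *ᵥ v

namespace IsMajoranaFamily

variable (h : IsMajoranaFamily (2 * n) A)
include h

lemma mulVec_fockVector_even (s : Fin n → ZMod 2) (j : Fin n) :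
    A (2 * j) *ᵥ fockVector A v s =
      (∏ i ∈ range j, (-1 : ℂ) ^ (extendByZero s i).val) • fockVector A v (s + Pi.single j 1) := by
  rw [fockVector, fockVector, mulVec_mulVec, h.mul_monomial_flip _ (by omega) j.isLt,
    smul_mulVec, extendByZero_add_single, ← Int.cast_smul_eq_zsmul ℂ]
  push_cast
  rfl

variable (hv : ∀ j < n, parity A j *ᵥ v = v)
include hv

lemma parity_mulVec_fockVector (s : Fin n → ZMod 2) (j : Fin n) :
    parity A j *ᵥ fockVector A v s = (-1 : ℂ) ^ (s j).val • fockVector A v s := by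
  rw [fockVector, mulVec_mulVec, h.parity_mul_monomial _ j.isLt, smul_mulVec, ← mulVec_mulVec,
    hv j j.isLt, extendByZero_apply, ← Int.cast_smul_eq_zsmul ℂ]
  push_cast
  rfl

lemma fockVector_orthonormal (hsa : ∀ k < 2 * n, IsSelfAdjoint (A k)) (hv₁ : star v ⬝ᵥ v = 1)
    (s t : Fin n → ZMod 2) :
    star (fockVector A v s) ⬝ᵥ fockVector A v t = if s = t then 1 else 0 := by
  split_ifs with hst
  · rw [hst, fockVector,
      star_mulVec_dotProduct_mulVec_of_mem_unitary (h.monomial_mem_unitary hsa _ le_rfl), hv₁]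
  · obtain ⟨j, hj⟩ := Function.ne_iff.1 hst
    refine star_dotProduct_eq_zero_of_isHermitian (h.isSelfAdjoint_parity hsa j.isLt)
      (h.parity_mulVec_fockVector hv s j) (h.parity_mulVec_fockVector hv t j) ?_
    rcases zmod_two_eq_zero_or_one (s j) with hs | hs <;>
      rcases zmod_two_eq_zero_or_one (t j) with ht | ht <;>
      simp_all [ZMod.val_one] <;> norm_num

lemma mulVec_fockVector {k : ℕ} {j : Fin n} (hkj : k / 2 = j) (s : Fin n → ZMod 2) :
    A k *ᵥ fockVector A v s =
      gamma n k (s + Pi.single j 1) s • fockVector A v (s + Pi.single j 1) := by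
  rw [gamma_add_single_apply hkj]
  obtain rfl | rfl : k = 2 * j ∨ k = 2 * j + 1 := by omega
  · simp [h.mulVec_fockVector_even]
  · rw [h.eq_smul_mul_parity j.isLt, smul_mulVec, ← mulVec_mulVec,
      h.parity_mulVec_fockVector hv, mulVec_smul, h.mulVec_fockVector_even, smul_smul, smul_smul,
      if_neg (by omega)]

end IsMajoranaFamily

end FockVectors

theorem majorana_family_unitarily_equivalent_to_jordan_wigner_general (n m : ℕ)
    (A : ℕ → Matrix (Fin m → ZMod 2) (Fin m → ZMod 2) ℂ)
    (hsa : ∀ k, k < 2 * n → (A k)ᴴ = A k)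
    (hrel : ∀ j k, j < 2 * n → k < 2 * n →
      A j * A k + A k * A j =
        if j = k then (2 : ℂ) • (1 : Matrix (Fin m → ZMod 2) (Fin m → ZMod 2) ℂ) else 0) :
    ∃ V : Matrix (Fin m → ZMod 2) (Fin n → ZMod 2) ℂ,
      Vᴴ * V = 1 ∧ ∀ k, k < 2 * n → A k * V = V * gamma n k := by
  have h : IsMajoranaFamily (2 * n) A := .of_anticommutator hrel
  obtain ⟨v, hv₁, hv⟩ := h.exists_vacuum
  refine ⟨of fun f s => fockVector A v s f, ?_, fun k hk => ?_⟩
  · ext s t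
    rw [mul_apply', one_apply]
    exact h.fockVector_orthonormal hv hsa hv₁ s t
  · ext f s
    have hkj : k / 2 = (⟨k / 2, by omega⟩ : Fin n) := rfl
    rw [mul_gamma_apply hkj]
    exact (congrFun (h.mulVec_fockVector hv hkj s) f).trans (mul_comm _ _)

/-- any family `A_0, …, A_{2n−1}` of self-adjoint `2^m × 2^m` matrices
(`1 ≤ n ≤ m`) satisfying the Majorana anticommutation relations is intertwined with the
`n`-qubit Jordan–Wigner Majorana operators `Γ_k` by a linear isometry
`V : ℂ^(2^n) → ℂ^(2^m)`: `V† V = I` and `A_k V = V Γ_k` for all `k < 2n`. -/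
theorem majorana_family_unitarily_equivalent_to_jordan_wigner (n m : ℕ)
    (hn : 1 ≤ n) (hnm : n ≤ m)
    (A : ℕ → Matrix (Fin m → ZMod 2) (Fin m → ZMod 2) ℂ)
    (hsa : ∀ k, k < 2 * n → (A k)ᴴ = A k)
    (hrel : ∀ j k, j < 2 * n → k < 2 * n →
      A j * A k + A k * A j =
        if j = k then (2 : ℂ) • (1 : Matrix (Fin m → ZMod 2) (Fin m → ZMod 2) ℂ) else 0) :
    ∃ V : Matrix (Fin m → ZMod 2) (Fin n → ZMod 2) ℂ,
      Vᴴ * V = 1 ∧ ∀ k, k < 2 * n → A k * V = V * gamma n k :=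
  majorana_family_unitarily_equivalent_to_jordan_wigner_general n m A hsa hrel

end FQ
end
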